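/- arXiv:math/0511430 — 3 statements merged into one kernel-verified Lean document; each statement's English description precedes it below -/
import Mathlib

section
/- In U(gl(2|1))[[t]]: [H₁, E₂] = −(1/2)(T + T')E₂ − (t/2)(T − T')E₃H₁ − (t/4)(T² − T'²)E₃, and [H₁, F₃] = −(1/2)(T + T')F₃ + (t/2)(T − T')F₂H₁ + (t/4)(T² − T'²)F₂. -/
noncomputable section

namespace SuperJordanian

open scoped BigOperators

/-- The generalized binomial coefficient `C(1/2, n)`. -/
def cHalf (n : ℕ) : ℂ :=
  (∏ i ∈ Finset.range n, ((1 : ℂ) / 2 - (i : ℂ))) / (n.factorial : ℂ)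

/-- Parity for `gl(2|1)`: `p(i,j) = 1` iff exactly one of `i`, `j` equals the third index. -/
def par (i j : Fin 3) : ℕ :=
  if (i = 2 ∧ j ≠ 2) ∨ (i ≠ 2 ∧ j = 2) then 1 else 0

/-- The generator `e_{ij}` in the free algebra. -/
def gen (i j : Fin 3) : FreeAlgebra ℂ (Fin 3 × Fin 3) := FreeAlgebra.ι ℂ (i, j)

/-- Defining relations of the enveloping algebra `U(gl(2|1))`:
`e_{ij} e_{kl} - (-1)^{p(i,j)p(k,l)} e_{kl} e_{ij}
  = δ_{jk} e_{il} - (-1)^{p(i,j)p(k,l)} δ_{li} e_{kj}`. -/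
inductive Rel : FreeAlgebra ℂ (Fin 3 × Fin 3) → FreeAlgebra ℂ (Fin 3 × Fin 3) → Prop
  | mk (i j k l : Fin 3) :
      Rel (gen i j * gen k l - ((-1 : ℂ) ^ (par i j * par k l)) • (gen k l * gen i j))
        ((if j = k then gen i l else 0)
          - ((-1 : ℂ) ^ (par i j * par k l)) • (if l = i then gen k j else 0))

/-- The enveloping algebra `U = U(gl(2|1))`. -/
abbrev U : Type := RingQuot Rel

/-- The image of `e_{ij}` in `U`. -/
def e (i j : Fin 3) : U := RingQuot.mkAlgHom ℂ Rel (gen i j)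

/-- The formal power series ring `U[[t]]`. -/
abbrev V : Type := PowerSeries U

/-- The central formal variable `t`. -/
def tv : V := PowerSeries.X

/-- The inclusion `U → U[[t]]` as constant power series. -/
def C : U →+* V := PowerSeries.C (R := U)

def e₁ : U := e 0 1
def f₁ : U := e 1 0
def h₁ : U := e 0 0 - e 1 1
def e₂ : U := e 1 2
def f₂ : U := e 2 1
def h₂ : U := e 1 1 + e 2 2
def e₃ : U := e 0 2
def f₃ : U := e 2 0
def h₃ : U := h₁ + h₂

/-- `s = Σ_{n ≥ 0} C(1/2, n) t^{2n} e₁^{2n}`, so that `s² = 1 + t² e₁²`. -/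
def s : V := PowerSeries.mk fun m => if m % 2 = 0 then cHalf (m / 2) • (e₁ ^ m) else 0

def T : V := tv * C e₁ + s
def T' : V := -(tv * C e₁) + s
def H₁ : V := s * C h₁
def F₁ : V := C f₁ - ((1 : ℂ) / 4) • (tv ^ 2 * C (e₁ * (h₁ ^ 2 - 1)))
def H₂ : V := C h₂ - ((1 : ℂ) / 2) • (tv ^ 2 * C (e₁ ^ 2 * h₁))
def E₂ : V := C e₂ - ((1 : ℂ) / 4) • (tv ^ 2 * C (e₁ * e₃ * (2 * h₁ + 1)))
def F₂ : V := C f₂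
def H₃ : V := C h₃ + ((1 : ℂ) / 2) • (tv ^ 2 * C (e₁ ^ 2 * h₁))
def E₃ : V := C e₃
def F₃ : V := C f₃ + ((1 : ℂ) / 4) • (tv ^ 2 * C (e₁ * f₂ * (2 * h₁ + 1)))

/-- Commutator `[a, b] = ab - ba`. -/
def br (a b : V) : V := a * b - b * a

/-- Anticommutator `{a, b} = ab + ba`. -/
def ac (a b : V) : V := a * b + b * a

/-!
Both identities are instances of one computation with an `sl₂`-pair `⟨e, h⟩` acting on a pair
`(x, y)` with `⁅e, x⁆ = y`, `⁅e, y⁆ = 0`, `⁅h, x⁆ = -x`, `⁅h, y⁆ = y` (namely `(e₂, e₃)` and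
`(f₃, -f₂)`). Writing `s = σ(t e)`, commuting `C z` past `σ(t e)` produces the derivative:
`⁅σ(t e), C z⁆ = t σ'(t e) ⁅e, z⁆` whenever `⁅e, ⁅e, z⁆⁆ = 0`. Both sides of the identity then
reduce to the same normal form, using only the differential equation `(1 + X²) σ' = X σ` of
`σ = √(1 + X²)`.
-/

end SuperJordanian

open PowerSeries

namespace Ring

variable {R : Type*} [Ring R]

theorem lie_mul (x y z : R) : ⁅x, y * z⁆ = ⁅x, y⁆ * z + y * ⁅x, z⁆ := by
  simp only [lie_def]; noncomm_ring

theorem mul_lie (x y z : R) : ⁅x * y, z⁆ = x * ⁅y, z⁆ + ⁅x, z⁆ * y := by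
  simp only [lie_def]; noncomm_ring

theorem sub_lie (x y z : R) : ⁅x - y, z⁆ = ⁅x, z⁆ - ⁅y, z⁆ := by
  simp only [lie_def]; noncomm_ring

theorem lie_neg (x y : R) : ⁅x, -y⁆ = -⁅x, y⁆ := by
  simp only [lie_def]; noncomm_ring

theorem pow_succ_lie {a x : R} (h : ⁅a, ⁅a, x⁆⁆ = 0) (n : ℕ) :
    ⁅a ^ (n + 1), x⁆ = (n + 1) • (a ^ n * ⁅a, x⁆) := by
  have hcomm : Commute a ⁅a, x⁆ := commute_iff_lie_eq.mpr h
  induction n with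
  | zero => simp
  | succ n ih =>
    rw [pow_succ', mul_lie, ih, mul_smul_comm, ← mul_assoc, ← pow_succ',
      ← (hcomm.pow_left (n + 1)).eq, succ_nsmul _ (n + 1)]

end Ring

theorem RingHom.map_lie {R S : Type*} [Ring R] [Ring S] (f : R →+* S) (x y : R) :
    f ⁅x, y⁆ = ⁅f x, f y⁆ := by
  simp only [Ring.lie_def, map_sub, map_mul]

namespace PowerSeries

theorem mul_X_mul {A : Type*} [Semiring A] (f g : A⟦X⟧) : f * (X * g) = X * (f * g) :=
  (commute_X f).left_comm g

section EvalXMul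

variable {R A : Type*} [CommRing R] [Ring A] [Algebra R A]

theorem coeff_lie_C (φ : A⟦X⟧) (x : A) (n : ℕ) : coeff n ⁅φ, C x⁆ = ⁅coeff n φ, x⁆ := by
  simp only [Ring.lie_def, map_sub, coeff_mul_C, coeff_C_mul]

/-- The substitution `f ↦ f(X • a)` of a scalar power series; it is multiplicative because the
powers of `a` commute with each other. -/
def evalXMul (a : A) : R⟦X⟧ →+* A⟦X⟧ where
  toFun f := mk fun n => coeff n f • a ^ n
  map_one' := by ext (_ | n) <;> simp [coeff_one]
  map_mul' f g := by
    ext n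
    simp only [coeff_mk, coeff_mul, Finset.sum_smul]
    refine Finset.sum_congr rfl fun ij hij => ?_
    rw [smul_mul_smul_comm, ← pow_add, Finset.HasAntidiagonal.mem_antidiagonal.mp hij]
  map_zero' := by ext; simp
  map_add' f g := by ext; simp [add_smul]

theorem coeff_evalXMul (a : A) (f : R⟦X⟧) (n : ℕ) :
    coeff n (evalXMul a f) = coeff n f • a ^ n := by
  simp [evalXMul]

theorem evalXMul_X (a : A) : evalXMul a (X : R⟦X⟧) = X * C a := by
  ext (_ | _ | n) <;> simp [coeff_evalXMul, coeff_X]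

theorem lie_evalXMul_C {a x : A} (hx : ⁅a, ⁅a, x⁆⁆ = 0) (f : R⟦X⟧) :
    ⁅evalXMul a f, C x⁆ = X * evalXMul a (d⁄dX R f) * C ⁅a, x⁆ := by
  ext n
  rcases n with _ | n
  · rw [coeff_lie_C, coeff_evalXMul, mul_assoc, coeff_zero_X_mul, pow_zero, Ring.lie_def,
      smul_mul_assoc, mul_smul_comm, one_mul, mul_one, sub_self]
  · rw [coeff_lie_C, coeff_evalXMul, Ring.lie_def, smul_mul_assoc, mul_smul_comm, ← smul_sub,
      ← Ring.lie_def, Ring.pow_succ_lie hx, mul_assoc, coeff_succ_X_mul, coeff_mul_C,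
      coeff_evalXMul, coeff_derivative, smul_mul_assoc, ← Nat.cast_smul_eq_nsmul R, smul_smul,
      Nat.cast_succ]

theorem commute_evalXMul_C {a x : A} (hx : Commute a x) (f : R⟦X⟧) :
    Commute (evalXMul a f) (C x) := by
  rw [commute_iff_lie_eq] at hx ⊢
  rw [lie_evalXMul_C (by rw [hx, Ring.lie_def, mul_zero, zero_mul, sub_zero]), hx, map_zero,
    mul_zero]

theorem lie_evalXMul_mul_C_C {a b z : A} (hz : ⁅a, ⁅a, z⁆⁆ = 0) (f : R⟦X⟧) :
    ⁅evalXMul a f * C b, C z⁆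
      = evalXMul a f * C ⁅b, z⁆ + X * evalXMul a (d⁄dX R f) * C ⁅a, z⁆ * C b := by
  rw [Ring.mul_lie, lie_evalXMul_C hz, ← RingHom.map_lie]

end EvalXMul

end PowerSeries

namespace JordanianTwist

section Correction

variable {A : Type*} [Ring A] {e h y : A}

theorem lie_h_correction (hhe : ⁅h, e⁆ = 2 • e) (hhy : ⁅h, y⁆ = y) :
    ⁅h, e * y * (2 * h + 1)⁆ = 3 • (e * y * (2 * h + 1)) := by
  have hh : ⁅h, 2 * h + 1⁆ = 0 := by rw [Ring.lie_def]; noncomm_ring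
  rw [Ring.lie_mul, Ring.lie_mul, hhe, hhy, hh]
  noncomm_ring

theorem lie_e_correction (hhe : ⁅h, e⁆ = 2 • e) (hey : ⁅e, y⁆ = 0) :
    ⁅e, e * y * (2 * h + 1)⁆ = -(4 • (e ^ 2 * y)) := by
  have he : ⁅e, 2 * h + 1⁆ = -(4 • e) := by
    rw [show ⁅e, 2 * h + 1⁆ = -(2 * ⁅h, e⁆) by simp only [Ring.lie_def]; noncomm_ring, hhe]
    noncomm_ring
  have hye : y * e = e * y := (commute_iff_lie_eq.mpr hey).eq.symm
  rw [Ring.lie_mul, Ring.lie_mul, hey, he, Ring.lie_def e e, sub_self]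
  simp only [zero_mul, mul_zero, zero_add, mul_neg, mul_smul_comm, mul_assoc, hye, pow_two]

theorem lie_e_lie_e_correction (hhe : ⁅h, e⁆ = 2 • e) (hey : ⁅e, y⁆ = 0) :
    ⁅e, ⁅e, e * y * (2 * h + 1)⁆⁆ = 0 := by
  have hey' : Commute e (e ^ 2 * y) :=
    ((Commute.refl e).pow_right 2).mul_right (commute_iff_lie_eq.mpr hey)
  rw [lie_e_correction hhe hey]
  exact (hey'.smul_right 4).neg_right.lie_eq

end Correction

section Twisted

variable {A : Type*} [Ring A] [Algebra ℂ A] {e h x y : A} (σ : ℂ⟦X⟧)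

theorem lie_twisted_normal_form (hσ : (1 + X ^ 2) * d⁄dX ℂ σ = X * σ)
    (hhe : ⁅h, e⁆ = 2 • e) (hex : ⁅e, x⁆ = y) (hey : ⁅e, y⁆ = 0) (hhx : ⁅h, x⁆ = -x)
    (hhy : ⁅h, y⁆ = y) :
    ⁅evalXMul e σ * C h, C x - (1 / 4 : ℂ) • (X ^ 2 * C (e * y * (2 * h + 1)))⁆
      = -(evalXMul e σ * C x) - (3 / 4 : ℂ) • (X ^ 2 * (evalXMul e σ * C (e * y * (2 * h + 1))))
        + X ^ 2 * (evalXMul e σ * C (e * y * h)) := by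
  set S := evalXMul e σ
  set S' := evalXMul e (d⁄dX ℂ σ)
  set q := e * y * (2 * h + 1)
  have hode : S' + X ^ 2 * (C e ^ 2 * S') = X * (C e * S) := by
    simpa [S, S', mul_add, add_mul, (commute_X (C e)).symm.mul_pow, evalXMul_X, mul_assoc] using
      congrArg (evalXMul e) hσ
  have hx : ⁅S * C h, C x⁆ = -(S * C x) + X * S' * C y * C h := by
    rw [lie_evalXMul_mul_C_C (by rw [hex, hey]), hhx, hex, map_neg, mul_neg]
  have hq : ⁅S * C h, C q⁆ = 3 • (S * C q) - 4 • (X * S' * C (e ^ 2 * y) * C h) := by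
    rw [lie_evalXMul_mul_C_C (lie_e_lie_e_correction hhe hey), lie_h_correction hhe hhy,
      lie_e_correction hhe hey]
    simp only [map_nsmul, map_neg, mul_neg, neg_mul, mul_smul_comm, smul_mul_assoc,
      sub_eq_add_neg]
    rfl
  have hS'e : Commute S' (C e ^ 2) := (commute_evalXMul_C (Commute.refl e) _).pow_right 2
  have hSe : Commute S (C e) := commute_evalXMul_C (Commute.refl e) _
  have hlin : ⁅S * C h, C x - (1 / 4 : ℂ) • (X ^ 2 * C q)⁆
      = ⁅S * C h, C x⁆ - (1 / 4 : ℂ) • (X ^ 2 * ⁅S * C h, C q⁆) := by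
    simp only [Ring.lie_def, mul_sub, sub_mul, mul_smul_comm, smul_mul_assoc, ← mul_assoc,
      (commute_X_pow (S * C h) 2).eq]
    module
  -- the differential equation of `σ` merges the two `σ'` terms into one `σ` term
  have hode_comb : X * S' * C y * C h + X ^ 2 * (X * S' * C (e ^ 2 * y) * C h)
      = X ^ 2 * (S * C (e * y * h)) :=
    calc X * S' * C y * C h + X ^ 2 * (X * S' * C (e ^ 2 * y) * C h)
        = X * ((S' + X ^ 2 * (C e ^ 2 * S')) * (C y * C h)) := by
          simp only [map_mul, map_pow, add_mul, mul_add, mul_assoc, mul_X_mul, hS'e.left_comm]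
      _ = X ^ 2 * (S * C (e * y * h)) := by
          rw [hode]
          simp only [map_mul, mul_assoc, pow_two, hSe.left_comm]
  rw [hlin, hx, hq, ← hode_comb]
  simp only [mul_sub, mul_smul_comm]
  module

theorem twisted_rhs_normal_form (hey : ⁅e, y⁆ = 0) :
    -((1 / 2 : ℂ) • (((X * C e + evalXMul e σ) + (-(X * C e) + evalXMul e σ))
        * (C x - (1 / 4 : ℂ) • (X ^ 2 * C (e * y * (2 * h + 1))))))
      - (1 / 2 : ℂ) • (X * (((X * C e + evalXMul e σ) - (-(X * C e) + evalXMul e σ)) * C y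
        * (evalXMul e σ * C h)))
      - (1 / 4 : ℂ) • (X * (((X * C e + evalXMul e σ) ^ 2 - (-(X * C e) + evalXMul e σ) ^ 2)
        * C y))
      = -(evalXMul e σ * C x) - (3 / 4 : ℂ) • (X ^ 2 * (evalXMul e σ * C (e * y * (2 * h + 1))))
        + X ^ 2 * (evalXMul e σ * C (e * y * h)) := by
  have hSe : Commute (evalXMul e σ) (C e) := commute_evalXMul_C (Commute.refl e) σ
  have hSy : Commute (evalXMul e σ) (C y) := commute_evalXMul_C (commute_iff_lie_eq.mpr hey) σ
  have hq : e * y * (2 * h + 1) = 2 • (e * y * h) + e * y := by noncomm_ring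
  simp only [hq, map_add, map_nsmul, map_mul, pow_two, add_mul, mul_add, sub_mul, mul_sub, neg_mul,
    mul_neg, mul_smul_comm, mul_assoc, mul_X_mul, hSe.left_comm, hSy.left_comm, hSe.eq]
  module

theorem lie_twisted_eq (hσ : (1 + X ^ 2) * d⁄dX ℂ σ = X * σ)
    (hhe : ⁅h, e⁆ = 2 • e) (hex : ⁅e, x⁆ = y) (hey : ⁅e, y⁆ = 0) (hhx : ⁅h, x⁆ = -x)
    (hhy : ⁅h, y⁆ = y) :
    ⁅evalXMul e σ * C h, C x - (1 / 4 : ℂ) • (X ^ 2 * C (e * y * (2 * h + 1)))⁆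
      = -((1 / 2 : ℂ) • (((X * C e + evalXMul e σ) + (-(X * C e) + evalXMul e σ))
          * (C x - (1 / 4 : ℂ) • (X ^ 2 * C (e * y * (2 * h + 1))))))
        - (1 / 2 : ℂ) • (X * (((X * C e + evalXMul e σ) - (-(X * C e) + evalXMul e σ)) * C y
          * (evalXMul e σ * C h)))
        - (1 / 4 : ℂ) • (X * (((X * C e + evalXMul e σ) ^ 2 - (-(X * C e) + evalXMul e σ) ^ 2)
          * C y)) :=
  (lie_twisted_normal_form σ hσ hhe hex hey hhx hhy).trans (twisted_rhs_normal_form σ hey).symm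

/- Applying `lie_twisted_eq` to `y := -f₂` in `U` would leave `RingQuot`'s own `Neg` instance,
which the `simp` lemmas about negation do not match; this variant avoids that. -/
theorem lie_twisted_eq_of_lie_eq_neg (hσ : (1 + X ^ 2) * d⁄dX ℂ σ = X * σ)
    (hhe : ⁅h, e⁆ = 2 • e) (hex : ⁅e, x⁆ = -y) (hey : ⁅e, y⁆ = 0) (hhx : ⁅h, x⁆ = -x)
    (hhy : ⁅h, y⁆ = y) :
    ⁅evalXMul e σ * C h, C x + (1 / 4 : ℂ) • (X ^ 2 * C (e * y * (2 * h + 1)))⁆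
      = -((1 / 2 : ℂ) • (((X * C e + evalXMul e σ) + (-(X * C e) + evalXMul e σ))
          * (C x + (1 / 4 : ℂ) • (X ^ 2 * C (e * y * (2 * h + 1))))))
        + (1 / 2 : ℂ) • (X * (((X * C e + evalXMul e σ) - (-(X * C e) + evalXMul e σ)) * C y
          * (evalXMul e σ * C h)))
        + (1 / 4 : ℂ) • (X * (((X * C e + evalXMul e σ) ^ 2 - (-(X * C e) + evalXMul e σ) ^ 2)
          * C y)) := by
  have h' := lie_twisted_eq σ hσ hhe hex (by rw [Ring.lie_neg, hey, neg_zero]) hhx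
    (by rw [Ring.lie_neg, hhy])
  simpa only [mul_neg, neg_mul, map_neg, smul_neg, sub_neg_eq_add] using h'

end Twisted

end JordanianTwist

namespace SuperJordanian

open JordanianTwist

theorem cHalf_succ (n : ℕ) : (n + 1 : ℂ) * cHalf (n + 1) = (1 / 2 - n) * cHalf n := by
  have hn : (n + 1 : ℂ) ≠ 0 := by exact_mod_cast n.succ_ne_zero
  simp only [cHalf, Finset.prod_range_succ, Nat.factorial_succ, Nat.cast_mul]
  push_cast
  field_simp

/-- The binomial series of `√(1 + X²)`. -/
def sqrtOnePlusXSq : ℂ⟦X⟧ := mk fun n => if n % 2 = 0 then cHalf (n / 2) else 0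

theorem sqrtOnePlusXSq_ode :
    (1 + X ^ 2) * d⁄dX ℂ sqrtOnePlusXSq = X * sqrtOnePlusXSq := by
  ext n
  rcases n with _ | _ | n
  · simp only [add_mul, one_mul, map_add, coeff_X_pow_mul', coeff_derivative, coeff_zero_X_mul]
    simp [sqrtOnePlusXSq]
  · norm_num [sqrtOnePlusXSq, coeff_derivative, add_mul, coeff_X_pow_mul', cHalf]
  · obtain ⟨k, rfl | rfl⟩ : ∃ k, n = 2 * k ∨ n = 2 * k + 1 := ⟨n / 2, by omega⟩
    · simp [sqrtOnePlusXSq, coeff_derivative, add_mul, coeff_X_pow_mul', Nat.add_mod]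
    · have hrec := cHalf_succ (k + 1)
      simp [sqrtOnePlusXSq, coeff_derivative, add_mul, coeff_X_pow_mul', Nat.add_mod,
        show (2 * k + 1 + 2 + 1) / 2 = k + 2 by omega, show (2 * k + 1 + 1) / 2 = k + 1 by omega]
      push_cast at hrec ⊢
      linear_combination 2 * hrec

theorem s_eq_evalXMul : s = evalXMul e₁ sqrtOnePlusXSq := by
  ext n
  simp [s, sqrtOnePlusXSq, coeff_evalXMul, ite_smul]

theorem lie_e_e (i j k l : Fin 3) (hp : par i j * par k l = 0) :
    ⁅e i j, e k l⁆ = (if j = k then e i l else 0) - (if l = i then e k j else 0) := by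
  simpa [e, hp, Ring.lie_def, apply_ite (RingQuot.mkAlgHom ℂ Rel)] using
    RingQuot.mkAlgHom_rel ℂ (Rel.mk i j k l)

theorem lie_h₁_e₁ : ⁅h₁, e₁⁆ = 2 • e₁ := by
  simp [h₁, e₁, Ring.sub_lie, lie_e_e, par, two_mul]

theorem lie_e₁_e₂ : ⁅e₁, e₂⁆ = e₃ := by simp [e₁, e₂, e₃, lie_e_e, par]

theorem lie_e₁_e₃ : ⁅e₁, e₃⁆ = 0 := by simp [e₁, e₃, lie_e_e, par]

theorem lie_h₁_e₂ : ⁅h₁, e₂⁆ = -e₂ := by simp [h₁, e₂, Ring.sub_lie, lie_e_e, par]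

theorem lie_h₁_e₃ : ⁅h₁, e₃⁆ = e₃ := by simp [h₁, e₃, Ring.sub_lie, lie_e_e, par]

theorem lie_e₁_f₃ : ⁅e₁, f₃⁆ = -f₂ := by simp [e₁, f₃, f₂, lie_e_e, par]

theorem lie_e₁_f₂ : ⁅e₁, f₂⁆ = 0 := by simp [e₁, f₂, lie_e_e, par]

theorem lie_h₁_f₃ : ⁅h₁, f₃⁆ = -f₃ := by simp [h₁, f₃, Ring.sub_lie, lie_e_e, par]

theorem lie_h₁_f₂ : ⁅h₁, f₂⁆ = f₂ := by simp [h₁, f₂, Ring.sub_lie, lie_e_e, par]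

/-- the commutators `[H₁, E₂]` and `[H₁, F₃]` in `U(gl(2|1))[[t]]`. -/
theorem statement2 :
    br H₁ E₂ = -(((1 : ℂ) / 2) • ((T + T') * E₂))
        - ((1 : ℂ) / 2) • (tv * ((T - T') * E₃ * H₁))
        - ((1 : ℂ) / 4) • (tv * ((T ^ 2 - T' ^ 2) * E₃)) ∧
    br H₁ F₃ = -(((1 : ℂ) / 2) • ((T + T') * F₃))
        + ((1 : ℂ) / 2) • (tv * ((T - T') * F₂ * H₁))
        + ((1 : ℂ) / 4) • (tv * ((T ^ 2 - T' ^ 2) * F₂)) := by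
  have hE := lie_twisted_eq _ sqrtOnePlusXSq_ode lie_h₁_e₁ lie_e₁_e₂ lie_e₁_e₃ lie_h₁_e₂ lie_h₁_e₃
  have hF := lie_twisted_eq_of_lie_eq_neg _ sqrtOnePlusXSq_ode lie_h₁_e₁ lie_e₁_f₃ lie_e₁_f₂
    lie_h₁_f₃ lie_h₁_f₂
  rw [← s_eq_evalXMul] at hE hF
  exact ⟨hE, hF⟩

end SuperJordanian
end
end

section
/- In U(gl(2|1))[[t]]: [H₁, F₂] = (1/2)(T + T')F₂, [H₁, E₃] = (1/2)(T + T')E₃, and T and T' both commute with F₂ and with E₃ (i.e., [T, F₂] = [T', F₂] = [T, E₃] = [T', E₃] = 0). -/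
noncomputable section

namespace SuperJordanian

open scoped BigOperators

/-! `F₂ = e₃₂` and `E₃ = e₁₃` commute with `e₁ = e₁₂`, hence with every coefficient of `s`, and
so with `s`, `T` and `T'`. Both have `h₁`-weight one, so `[H₁, x] = s [h₁, x] = s x`, while
`T + T' = 2 s`. -/

theorem _root_.PowerSeries.commute_C_of_forall_coeff {R : Type*} [Semiring R] {φ : PowerSeries R}
    {a : R} (h : ∀ n, Commute (PowerSeries.coeff n φ) a) : Commute φ (PowerSeries.C a) := by
  ext n
  rw [PowerSeries.coeff_mul_C, PowerSeries.coeff_C_mul, (h n).eq]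

lemma e_mul_sub_mul (i j k l : Fin 3) :
    e i j * e k l - ((-1 : ℂ) ^ (par i j * par k l)) • (e k l * e i j) =
      (if j = k then e i l else 0)
        - ((-1 : ℂ) ^ (par i j * par k l)) • (if l = i then e k j else 0) := by
  simpa [e, gen, apply_ite (RingQuot.mkAlgHom ℂ Rel)] using
    RingQuot.mkAlgHom_rel ℂ (Rel.mk i j k l)

lemma commute_e_e {i j k l : Fin 3} (hjk : j ≠ k) (hli : l ≠ i)
    (hpar : par i j * par k l = 0) : Commute (e i j) (e k l) := by
  show e i j * e k l = e k l * e i j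
  simpa [hjk, hli, hpar, sub_eq_zero] using e_mul_sub_mul i j k l

lemma e_diag_mul_sub_mul (i k l : Fin 3) :
    e i i * e k l - e k l * e i i =
      (if i = k then e i l else 0) - (if l = i then e k i else 0) := by
  have hpar : par i i = 0 := by simp [par]
  simpa [hpar] using e_mul_sub_mul i i k l

lemma commute_e₁_f₂ : Commute e₁ f₂ := commute_e_e (by decide) (by decide) (by decide)

lemma commute_e₁_e₃ : Commute e₁ e₃ := commute_e_e (by decide) (by decide) (by decide)

lemma h₁_mul_sub_mul_f₂ : h₁ * f₂ - f₂ * h₁ = f₂ := by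
  have h₀₀ := e_diag_mul_sub_mul 0 2 1
  have h₁₁ := e_diag_mul_sub_mul 1 2 1
  simp only [Fin.reduceEq, if_false, if_true, sub_self, zero_sub] at h₀₀ h₁₁
  calc h₁ * f₂ - f₂ * h₁ = (e 0 0 * e 2 1 - e 2 1 * e 0 0) - (e 1 1 * e 2 1 - e 2 1 * e 1 1) := by
        simp only [h₁, f₂, sub_mul, mul_sub]; abel
    _ = f₂ := by rw [h₀₀, h₁₁, f₂]; abel

lemma h₁_mul_sub_mul_e₃ : h₁ * e₃ - e₃ * h₁ = e₃ := by
  have h₀₀ := e_diag_mul_sub_mul 0 0 2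
  have h₁₁ := e_diag_mul_sub_mul 1 0 2
  simp only [Fin.reduceEq, if_false, if_true, sub_self, sub_zero] at h₀₀ h₁₁
  calc h₁ * e₃ - e₃ * h₁ = (e 0 0 * e 0 2 - e 0 2 * e 0 0) - (e 1 1 * e 0 2 - e 0 2 * e 1 1) := by
        simp only [h₁, e₃, sub_mul, mul_sub]; abel
    _ = e₃ := by rw [h₀₀, h₁₁, e₃, sub_zero]

section CommuteE₁

variable {a : U} (ha : Commute e₁ a)
include ha

lemma commute_s_C : Commute s (C a) :=
  PowerSeries.commute_C_of_forall_coeff fun n => by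
    rw [s, PowerSeries.coeff_mk]
    split_ifs
    · exact (ha.pow_left n).smul_left _
    · exact Commute.zero_left a

lemma commute_tv_mul_C : Commute (tv * C e₁) (C a) :=
  (PowerSeries.commute_X _).symm.mul_left (ha.map C)

lemma commute_T_C : Commute T (C a) :=
  (commute_tv_mul_C ha).add_left (commute_s_C ha)

lemma commute_T'_C : Commute T' (C a) :=
  (commute_tv_mul_C ha).neg_left.add_left (commute_s_C ha)

lemma br_H₁_C (hh : h₁ * a - a * h₁ = a) : br H₁ (C a) = s * C a := by
  have hC : C h₁ * C a - C a * C h₁ = C a := by rw [← map_mul, ← map_mul, ← map_sub, hh]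
  calc br H₁ (C a) = s * (C h₁ * C a) - (C a * s) * C h₁ := by rw [br, H₁, mul_assoc, mul_assoc]
    _ = s * (C h₁ * C a - C a * C h₁) := by rw [← (commute_s_C ha).eq, mul_sub, mul_assoc]
    _ = s * C a := by rw [hC]

end CommuteE₁

lemma T_add_T' : T + T' = (2 : ℂ) • s := by rw [T, T', two_smul]; abel

lemma br_eq_zero_of_commute {a b : V} (h : Commute a b) : br a b = 0 := sub_eq_zero.mpr h.eq

/-- the commutators of `H₁`, `T`, `T'` with `F₂` and `E₃` in `U(gl(2|1))[[t]]`. -/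
theorem statement3 :
    br H₁ F₂ = ((1 : ℂ) / 2) • ((T + T') * F₂) ∧
    br H₁ E₃ = ((1 : ℂ) / 2) • ((T + T') * E₃) ∧
    br T F₂ = 0 ∧ br T' F₂ = 0 ∧ br T E₃ = 0 ∧ br T' E₃ = 0 := by
  have half_T_add_T' (x : V) : ((1 : ℂ) / 2) • ((T + T') * x) = s * x := by
    rw [T_add_T', smul_mul_assoc, smul_smul]; norm_num
  simp only [half_T_add_T', F₂, E₃]
  exact ⟨br_H₁_C commute_e₁_f₂ h₁_mul_sub_mul_f₂, br_H₁_C commute_e₁_e₃ h₁_mul_sub_mul_e₃,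
    br_eq_zero_of_commute (commute_T_C commute_e₁_f₂),
    br_eq_zero_of_commute (commute_T'_C commute_e₁_f₂),
    br_eq_zero_of_commute (commute_T_C commute_e₁_e₃),
    br_eq_zero_of_commute (commute_T'_C commute_e₁_e₃)⟩

end SuperJordanian
end
end

section
/- Let φ: U → U be the algebra automorphism of U = U(gl(2|1)) determined by φ(e₁₁) = −e₂₂, φ(e₂₂) = −e₁₁, φ(e₃₃) = −e₃₃, φ(e₁₂) = e₁₂, φ(e₂₁) = e₂₁, φ(e₂₃) = e₃₁, φ(e₃₂) = −e₁₃, φ(e₁₃) = −e₃₂, φ(e₃₁) = e₂₃, and let Φ: U[[t]] → U[[t]] be its coefficient-wise extension to power series. Then Φ fixes the Jordanian Borel generators and permutes the deformed fermionic generators: Φ(T) = T, Φ(T') = T', Φ(H₁) = H₁, Φ(F₁) = F₁, Φ(E₂) = F₃, Φ(F₂) = −E₃, Φ(H₂) = −H₃, Φ(E₃) = −F₂, Φ(F₃) = E₂, Φ(H₃) = −H₂ (Proposition 2 of the paper). -/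
noncomputable section

namespace SuperJordanian

open scoped BigOperators

/-- The defining property of the automorphism `φ` on the generators `e_{ij}`. -/
def phiProp (φ : U →ₐ[ℂ] U) : Prop :=
    φ (e 0 0) = -(e 1 1) ∧ φ (e 1 1) = -(e 0 0) ∧ φ (e 2 2) = -(e 2 2) ∧
    φ (e 0 1) = e 0 1 ∧ φ (e 1 0) = e 1 0 ∧ φ (e 1 2) = e 2 0 ∧
    φ (e 2 1) = -(e 0 2) ∧ φ (e 0 2) = -(e 2 1) ∧ φ (e 2 0) = e 1 2

/-!
`Φ` is a `ℂ`-algebra map fixing `t`, so it acts on each generator through `φ` on its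
`U`-coefficients. `φ` fixes `e₁` and `h₁ = e₁₁ - e₂₂`, hence `s` and every coefficient built
from them, and exchanges `e₂ ↔ f₃`, `e₃ ↔ -f₂`, `h₂ ↔ -h₃`. The resulting sign flip
`e₁e₃(2h₁+1) ↦ -e₁f₂(2h₁+1)` matches the opposite signs of the `t²`-corrections in `E₂`, `F₃`.
-/

namespace phiProp

variable {φ : U →ₐ[ℂ] U}

theorem apply_e₁ (hφ : phiProp φ) : φ e₁ = e₁ := hφ.2.2.2.1
theorem apply_f₁ (hφ : phiProp φ) : φ f₁ = f₁ := hφ.2.2.2.2.1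
theorem apply_e₂ (hφ : phiProp φ) : φ e₂ = f₃ := hφ.2.2.2.2.2.1
theorem apply_f₂ (hφ : phiProp φ) : φ f₂ = -e₃ := hφ.2.2.2.2.2.2.1
theorem apply_e₃ (hφ : phiProp φ) : φ e₃ = -f₂ := hφ.2.2.2.2.2.2.2.1
theorem apply_f₃ (hφ : phiProp φ) : φ f₃ = e₂ := hφ.2.2.2.2.2.2.2.2

theorem apply_h₁ (hφ : phiProp φ) : φ h₁ = h₁ := by
  rw [h₁, map_sub, hφ.1, hφ.2.1, neg_sub_neg]

theorem apply_h₂ (hφ : phiProp φ) : φ h₂ = -h₃ := by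
  rw [h₂, map_add, hφ.2.1, hφ.2.2.1, h₃, h₁, h₂]
  abel

theorem apply_h₃ (hφ : phiProp φ) : φ h₃ = -h₂ := by
  rw [h₃, map_add, hφ.apply_h₁, hφ.apply_h₂, h₃]
  abel

theorem apply_e₁_mul_h₁_sq_sub_one (hφ : phiProp φ) :
    φ (e₁ * (h₁ ^ 2 - 1)) = e₁ * (h₁ ^ 2 - 1) := by
  rw [map_mul, map_sub, map_pow, map_one, hφ.apply_e₁, hφ.apply_h₁]

theorem apply_e₁_sq_mul_h₁ (hφ : phiProp φ) : φ (e₁ ^ 2 * h₁) = e₁ ^ 2 * h₁ := by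
  rw [map_mul, map_pow, hφ.apply_e₁, hφ.apply_h₁]

theorem apply_two_mul_h₁_add_one (hφ : phiProp φ) : φ (2 * h₁ + 1) = 2 * h₁ + 1 := by
  rw [map_add, map_mul, map_ofNat, map_one, hφ.apply_h₁]

theorem apply_e₁_mul_e₃_mul (hφ : phiProp φ) :
    φ (e₁ * e₃ * (2 * h₁ + 1)) = -(e₁ * f₂ * (2 * h₁ + 1)) := by
  -- `mul_neg` needs explicit arguments: the `RingQuot` multiplication on `U` does not unify
  -- with the one of `Ring U` at instance transparency.
  rw [map_mul, map_mul, hφ.apply_e₁, hφ.apply_e₃, hφ.apply_two_mul_h₁_add_one, mul_neg e₁ f₂,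
    neg_mul (e₁ * f₂)]

theorem apply_e₁_mul_f₂_mul (hφ : phiProp φ) :
    φ (e₁ * f₂ * (2 * h₁ + 1)) = -(e₁ * e₃ * (2 * h₁ + 1)) := by
  rw [map_mul, map_mul, hφ.apply_e₁, hφ.apply_f₂, hφ.apply_two_mul_h₁_add_one, mul_neg e₁ e₃,
    neg_mul (e₁ * e₃)]

end phiProp

theorem _root_.PowerSeries.map_algHom_smul {R A B : Type*} [CommSemiring R] [Semiring A]
    [Semiring B] [Algebra R A] [Algebra R B] (f : A →ₐ[R] B) (c : R) (p : PowerSeries A) :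
    PowerSeries.map (f : A →+* B) (c • p) = c • PowerSeries.map (f : A →+* B) p := by
  simpa only [PowerSeries.mapAlgHom_apply] using map_smul (PowerSeries.mapAlgHom f) c p

theorem map_C (f : U →ₐ[ℂ] U) (a : U) : PowerSeries.map (f : U →+* U) (C a) = C (f a) :=
  PowerSeries.map_C _ a

theorem map_tv (f : U →+* U) : PowerSeries.map f tv = tv :=
  PowerSeries.map_X f

theorem map_smul_tv_sq_mul_C (f : U →ₐ[ℂ] U) (c : ℂ) (b : U) :
    PowerSeries.map (f : U →+* U) (c • (tv ^ 2 * C b)) = c • (tv ^ 2 * C (f b)) := by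
  rw [PowerSeries.map_algHom_smul, map_mul, map_pow, map_tv, map_C]

theorem map_s {f : U →ₐ[ℂ] U} (hf : f e₁ = e₁) : PowerSeries.map (f : U →+* U) s = s := by
  ext n
  simp only [s, PowerSeries.coeff_map, PowerSeries.coeff_mk]
  split_ifs
  · rw [AlgHom.coe_toRingHom, map_smul, map_pow, hf]
  · exact map_zero f

/-- the coefficient-wise extension `Φ` of `φ` to `U[[t]]` fixes the
Jordanian Borel generators and permutes the deformed fermionic generators. -/
theorem statement11 (φ : U →ₐ[ℂ] U) (hφ : phiProp φ) :
    PowerSeries.map (φ : U →+* U) T = T ∧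
    PowerSeries.map (φ : U →+* U) T' = T' ∧
    PowerSeries.map (φ : U →+* U) H₁ = H₁ ∧
    PowerSeries.map (φ : U →+* U) F₁ = F₁ ∧
    PowerSeries.map (φ : U →+* U) E₂ = F₃ ∧
    PowerSeries.map (φ : U →+* U) F₂ = -E₃ ∧
    PowerSeries.map (φ : U →+* U) H₂ = -H₃ ∧
    PowerSeries.map (φ : U →+* U) E₃ = -F₂ ∧
    PowerSeries.map (φ : U →+* U) F₃ = E₂ ∧
    PowerSeries.map (φ : U →+* U) H₃ = -H₂ := by
  have hs := map_s hφ.apply_e₁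
  refine ⟨?_, ?_, ?_, ?_, ?_, ?_, ?_, ?_, ?_, ?_⟩
  · rw [T, map_add, map_mul, map_tv, map_C, hφ.apply_e₁, hs]
  · rw [T', map_add, map_neg, map_mul, map_tv, map_C, hφ.apply_e₁, hs]
  · rw [H₁, map_mul, hs, map_C, hφ.apply_h₁]
  · rw [F₁, map_sub, map_C, map_smul_tv_sq_mul_C, hφ.apply_f₁, hφ.apply_e₁_mul_h₁_sq_sub_one]
  · rw [E₂, F₃, map_sub, map_C, map_smul_tv_sq_mul_C, hφ.apply_e₂, hφ.apply_e₁_mul_e₃_mul, map_neg,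
      mul_neg (tv ^ 2), smul_neg, sub_neg_eq_add]
  · rw [F₂, E₃, map_C, hφ.apply_f₂, map_neg]
  · rw [H₂, H₃, map_sub, map_C, map_smul_tv_sq_mul_C, hφ.apply_h₂, hφ.apply_e₁_sq_mul_h₁, map_neg,
      neg_add, sub_eq_add_neg]
  · rw [E₃, F₂, map_C, hφ.apply_e₃, map_neg]
  · rw [F₃, E₂, map_add, map_C, map_smul_tv_sq_mul_C, hφ.apply_f₃, hφ.apply_e₁_mul_f₂_mul, map_neg,
      mul_neg (tv ^ 2), smul_neg, sub_eq_add_neg]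
  · rw [H₃, H₂, map_add, map_C, map_smul_tv_sq_mul_C, hφ.apply_h₃, hφ.apply_e₁_sq_mul_h₁, map_neg,
      neg_sub', sub_neg_eq_add]

end SuperJordanian
end
end
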